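/- Let H be a dephased N×N complex Hadamard matrix whose defect d(H) equals zero. Then H is isolated: there exists a neighbourhood W of H in the space of N×N complex matrices such that the only dephased complex Hadamard matrix contained in W is H itself. -/

import Mathlib

/-- A complex Hadamard matrix: all entries of modulus one, and `H * Hᴴ = N • 1`. -/
def IsComplexHadamard {n : Type*} [Fintype n] [DecidableEq n] (H : Matrix n n ℂ) : Prop :=
  (∀ i j, ‖H i j‖ = 1) ∧
    H * H.conjTranspose = (Fintype.card n : ℂ) • (1 : Matrix n n ℂ)

/-- Dephased w.r.t. the distinguished index `i0`: all entries of the `i0`-th row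
and column are equal to `1`. -/
def IsDephased {n : Type*} (H : Matrix n n ℂ) (i0 : n) : Prop :=
  (∀ j, H i0 j = 1) ∧ (∀ i, H i i0 = 1)

/-- The solution space of the real linear system defining the defect of `H`:
`R` has vanishing first row (off the corner) and first column, and
`∑_k H_ik · conj(H_jk) · (R_ik − R_jk) = 0` for all `i < j`. -/
def defectSpace (N : ℕ) (hN : 0 < N) (H : Matrix (Fin N) (Fin N) ℂ) :
    Submodule ℝ (Matrix (Fin N) (Fin N) ℝ) where
  carrier := { R |
    (∀ j : Fin N, j ≠ ⟨0, hN⟩ → R ⟨0, hN⟩ j = 0) ∧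
    (∀ i : Fin N, R i ⟨0, hN⟩ = 0) ∧
    (∀ i j : Fin N, i < j →
      ∑ k : Fin N, H i k * (starRingEnd ℂ) (H j k) * (((R i k : ℝ) : ℂ) - ((R j k : ℝ) : ℂ)) = 0) }
  zero_mem' := by
    refine ⟨fun j _ => rfl, fun i => rfl, fun i j hij => ?_⟩
    simp
  add_mem' := by
    rintro R S ⟨hR1, hR2, hR3⟩ ⟨hS1, hS2, hS3⟩
    refine ⟨fun j hj => ?_, fun i => ?_, fun i j hij => ?_⟩
    · simp [Matrix.add_apply, hR1 j hj, hS1 j hj]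
    · simp [Matrix.add_apply, hR2 i, hS2 i]
    · have key : ∀ k : Fin N,
        H i k * (starRingEnd ℂ) (H j k) * ((((R + S) i k : ℝ) : ℂ) - (((R + S) j k : ℝ) : ℂ)) =
          H i k * (starRingEnd ℂ) (H j k) * (((R i k : ℝ) : ℂ) - ((R j k : ℝ) : ℂ)) +
          H i k * (starRingEnd ℂ) (H j k) * (((S i k : ℝ) : ℂ) - ((S j k : ℝ) : ℂ)) := by
        intro k
        simp only [Matrix.add_apply]
        push_cast
        ring
      rw [Finset.sum_congr rfl fun k _ => key k, Finset.sum_add_distrib,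
        hR3 i j hij, hS3 i j hij, add_zero]
  smul_mem' := by
    rintro c R ⟨hR1, hR2, hR3⟩
    refine ⟨fun j hj => ?_, fun i => ?_, fun i j hij => ?_⟩
    · simp [Matrix.smul_apply, hR1 j hj]
    · simp [Matrix.smul_apply, hR2 i]
    · have key : ∀ k : Fin N,
        H i k * (starRingEnd ℂ) (H j k) * ((((c • R) i k : ℝ) : ℂ) - (((c • R) j k : ℝ) : ℂ)) =
          (c : ℂ) * (H i k * (starRingEnd ℂ) (H j k) * (((R i k : ℝ) : ℂ) - ((R j k : ℝ) : ℂ))) := by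
        intro k
        simp only [Matrix.smul_apply, smul_eq_mul]
        push_cast
        ring
      rw [Finset.sum_congr rfl fun k _ => key k, ← Finset.mul_sum, hR3 i j hij, mul_zero]

/-- The defect of a complex Hadamard matrix: the dimension of `defectSpace`. -/
noncomputable def defect (N : ℕ) (hN : 0 < N) (H : Matrix (Fin N) (Fin N) ℂ) : ℕ :=
  Module.finrank ℝ (defectSpace N hN H)

open Complex ContinuousLinearMap

noncomputable section DefectAux
variable {N : ℕ}

def entryCLM (i j : Fin N) : (Fin N → Fin N → ℝ) →L[ℝ] ℝ :=
  (ContinuousLinearMap.proj (R := ℝ) (φ := fun _ : Fin N => ℝ) j).comp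
    (ContinuousLinearMap.proj (R := ℝ) (φ := fun _ : Fin N => (Fin N → ℝ)) i)

@[simp] lemma entryCLM_apply (i j : Fin N) (R : Fin N → Fin N → ℝ) :
    entryCLM i j R = R i j := rfl

def linCLM (i j k : Fin N) : (Fin N → Fin N → ℝ) →L[ℝ] ℂ :=
  (entryCLM i k - entryCLM j k).smulRight Complex.I

lemma linCLM_apply (i j k : Fin N) (R : Fin N → Fin N → ℝ) :
    linCLM i j k R = (((R i k : ℝ) : ℂ) - ((R j k : ℝ) : ℂ)) * Complex.I := by
  show (R i k - R j k) • Complex.I = _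
  rw [Complex.real_smul]
  push_cast
  ring

def Gmap (H : Matrix (Fin N) (Fin N) ℂ) (i0 : Fin N) (R : Fin N → Fin N → ℝ) :
    (Fin N → ℝ) × (Fin N → ℝ) × (Fin N → Fin N → ℂ) :=
  (R i0, fun i => R i i0,
    fun i j => ∑ k, H i k * (starRingEnd ℂ) (H j k) *
      Complex.exp ((((R i k : ℝ) : ℂ) - ((R j k : ℝ) : ℂ)) * Complex.I))

def Lmap (H : Matrix (Fin N) (Fin N) ℂ) (i0 : Fin N) :
    (Fin N → Fin N → ℝ) →L[ℝ] (Fin N → ℝ) × (Fin N → ℝ) × (Fin N → Fin N → ℂ) :=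
  (ContinuousLinearMap.proj i0).prod
    ((ContinuousLinearMap.pi fun i => entryCLM i i0).prod
      (ContinuousLinearMap.pi fun i => ContinuousLinearMap.pi fun j =>
        ∑ k, (H i k * (starRingEnd ℂ) (H j k)) • linCLM i j k))

lemma third_hasFDerivAt (H : Matrix (Fin N) (Fin N) ℂ) (i j : Fin N) :
    HasFDerivAt (fun R : Fin N → Fin N → ℝ => ∑ k, H i k * (starRingEnd ℂ) (H j k) *
        Complex.exp ((((R i k : ℝ) : ℂ) - ((R j k : ℝ) : ℂ)) * Complex.I))
      (∑ k, (H i k * (starRingEnd ℂ) (H j k)) • linCLM i j k) 0 := by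
  apply HasFDerivAt.fun_sum
  intro k _
  have h1 : HasFDerivAt (fun R : Fin N → Fin N → ℝ =>
      (((R i k : ℝ) : ℂ) - ((R j k : ℝ) : ℂ)) * Complex.I) (linCLM i j k) 0 := by
    have := (linCLM i j k).hasFDerivAt (x := 0)
    have hfe : ⇑(linCLM i j k) = fun R : Fin N → Fin N → ℝ =>
        (((R i k : ℝ) : ℂ) - ((R j k : ℝ) : ℂ)) * Complex.I := funext (linCLM_apply i j k)
    rwa [hfe] at this
  have hexp : HasFDerivAt Complex.exp
      ((((1 : ℂ →L[ℂ] ℂ).smulRight (Complex.exp 0)).restrictScalars ℝ))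
      ((fun R : Fin N → Fin N → ℝ =>
        (((R i k : ℝ) : ℂ) - ((R j k : ℝ) : ℂ)) * Complex.I) 0) := by
    simp only [Pi.zero_apply, Complex.ofReal_zero, sub_zero, sub_self, zero_mul]
    exact ((Complex.hasDerivAt_exp 0).hasFDerivAt).restrictScalars ℝ
  have hcomp := (hexp.comp 0 h1).const_mul (H i k * (starRingEnd ℂ) (H j k))
  refine hcomp.congr_fderiv ?_
  ext R
  simp [Complex.exp_zero, mul_comm]

lemma Gmap_hasFDerivAt (H : Matrix (Fin N) (Fin N) ℂ) (i0 : Fin N) :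
    HasFDerivAt (Gmap H i0) (Lmap H i0) 0 := by
  refine HasFDerivAt.prodMk ?_ (HasFDerivAt.prodMk ?_ ?_)
  · exact hasFDerivAt_apply i0 0
  · refine hasFDerivAt_pi.2 fun i => ?_
    have : HasFDerivAt (⇑(entryCLM i i0)) (entryCLM i i0) 0 := (entryCLM i i0).hasFDerivAt
    exact this
  · exact hasFDerivAt_pi.2 fun i => hasFDerivAt_pi.2 fun j => third_hasFDerivAt H i j

lemma Gmap_contDiff (H : Matrix (Fin N) (Fin N) ℂ) (i0 : Fin N) :
    ContDiff ℝ 1 (Gmap H i0) := by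
  refine ContDiff.prodMk ?_ (ContDiff.prodMk ?_ ?_)
  · exact (ContinuousLinearMap.proj i0 :
      (Fin N → Fin N → ℝ) →L[ℝ] (Fin N → ℝ)).contDiff
  · refine contDiff_pi.2 fun i => ?_
    have : ContDiff ℝ 1 ⇑(entryCLM i i0) := (entryCLM i i0).contDiff
    exact this
  · refine contDiff_pi.2 fun i => contDiff_pi.2 fun j => ContDiff.sum fun k _ => ?_
    refine contDiff_const.mul ?_
    have hfe : (fun R : Fin N → Fin N → ℝ =>
        Complex.exp ((((R i k : ℝ) : ℂ) - ((R j k : ℝ) : ℂ)) * Complex.I)) =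
        Complex.exp ∘ ⇑(linCLM i j k) := by
      funext R; simp [linCLM_apply]
    rw [hfe]
    exact ((Complex.contDiff_exp (𝕜 := ℂ)).restrict_scalars ℝ).comp (linCLM i j k).contDiff

end DefectAux

/-- A dephased complex Hadamard matrix with zero defect is isolated:
it has a neighbourhood containing no other dephased complex Hadamard matrix. -/
theorem isolated_of_defect_zero (N : ℕ) (hN : 0 < N)
    (H : Matrix (Fin N) (Fin N) ℂ) (hH : IsComplexHadamard H)
    (hdeph : IsDephased H ⟨0, hN⟩) (hdef : defect N hN H = 0) :
    ∃ W ∈ nhds H, ∀ H' ∈ W, IsComplexHadamard H' → IsDephased H' ⟨0, hN⟩ → H' = H := by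
  classical
  set i0 : Fin N := ⟨0, hN⟩ with hi0
  -- the defect space is trivial
  have hdefbot : defectSpace N hN H = ⊥ := Submodule.finrank_eq_zero.mp hdef
  -- the linearization has trivial kernel
  have hker : ∀ R : Fin N → Fin N → ℝ, Lmap H i0 R = 0 → R = 0 := by
    intro R hR
    have h1 : ∀ j, R i0 j = 0 := fun j => congrFun (congrArg Prod.fst hR) j
    have h2 : ∀ i, R i i0 = 0 := fun i =>
      congrFun (congrArg Prod.fst (congrArg Prod.snd hR)) i
    have h3 : ∀ i j : Fin N,
        ∑ k, H i k * (starRingEnd ℂ) (H j k) *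
          (((R i k : ℝ) : ℂ) - ((R j k : ℝ) : ℂ)) = 0 := by
      intro i j
      have h3' := congrFun (congrFun (congrArg Prod.snd (congrArg Prod.snd hR)) i) j
      have h3'' : (∑ k, (H i k * (starRingEnd ℂ) (H j k)) • linCLM i j k) R = 0 := h3'
      rw [ContinuousLinearMap.sum_apply] at h3''
      have heq : ∀ k : Fin N, ((H i k * (starRingEnd ℂ) (H j k)) • linCLM i j k) R =
          (H i k * (starRingEnd ℂ) (H j k) *
            (((R i k : ℝ) : ℂ) - ((R j k : ℝ) : ℂ))) * Complex.I := by
        intro k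
        rw [ContinuousLinearMap.smul_apply, linCLM_apply]
        simp [smul_eq_mul]; ring
      rw [Finset.sum_congr rfl fun k _ => heq k, ← Finset.sum_mul] at h3''
      rcases mul_eq_zero.mp h3'' with h | h
      · exact h
      · exact absurd h Complex.I_ne_zero
    have hmem : R ∈ defectSpace N hN H :=
      ⟨fun j _ => h1 j, h2, fun i j _ => h3 i j⟩
    rw [hdefbot] at hmem
    exact (Submodule.mem_bot ℝ).mp hmem
  -- a left inverse of the linearization
  have hkerbot : LinearMap.ker (Lmap H i0).toLinearMap = ⊥ :=
    LinearMap.ker_eq_bot'.mpr fun R h => hker R h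
  obtain ⟨g, hg⟩ := LinearMap.exists_leftInverse_of_injective (Lmap H i0).toLinearMap hkerbot
  set gc := LinearMap.toContinuousLinearMap g with hgc
  have hstrict : HasStrictFDerivAt (Gmap H i0) (Lmap H i0) 0 :=
    (Gmap_contDiff H i0).contDiffAt.hasStrictFDerivAt' (Gmap_hasFDerivAt H i0) one_ne_zero
  have hgst : HasStrictFDerivAt (⇑gc ∘ Gmap H i0) (gc.comp (Lmap H i0)) 0 :=
    gc.hasStrictFDerivAt.comp 0 hstrict
  have hid : gc.comp (Lmap H i0) =
      (ContinuousLinearEquiv.refl ℝ (Fin N → Fin N → ℝ) :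
        (Fin N → Fin N → ℝ) →L[ℝ] (Fin N → Fin N → ℝ)) := by
    apply ContinuousLinearMap.ext
    intro R
    have := LinearMap.congr_fun hg R
    simpa [hgc] using this
  rw [hid] at hgst
  set phi := hgst.toOpenPartialHomeomorph _ with hphi
  have hs0 : (0 : Fin N → Fin N → ℝ) ∈ phi.source :=
    hgst.mem_toOpenPartialHomeomorph_source
  have hsnhds : phi.source ∈ nhds (0 : Fin N → Fin N → ℝ) :=
    phi.open_source.mem_nhds hs0
  have hinj : Set.InjOn (⇑gc ∘ Gmap H i0) phi.source := by
    have h := phi.injOn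
    rwa [hphi, hgst.toOpenPartialHomeomorph_coe] at h
  -- the chart: entrywise argument relative to H
  set Φ : Matrix (Fin N) (Fin N) ℂ → (Fin N → Fin N → ℝ) :=
    fun M i j => Complex.arg (M i j * (starRingEnd ℂ) (H i j)) with hΦ
  have hHone : ∀ i j, H i j * (starRingEnd ℂ) (H i j) = 1 := by
    intro i j
    rw [Complex.mul_conj, Complex.normSq_eq_norm_sq, hH.1 i j]
    norm_num
  have hΦH : Φ H = 0 := by
    funext i j
    show Complex.arg (H i j * (starRingEnd ℂ) (H i j)) = 0
    rw [hHone i j, Complex.arg_one]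
  have hΦcont : ContinuousAt Φ H := by
    apply continuousAt_pi.2
    intro i
    apply continuousAt_pi.2
    intro j
    have h1 : ContinuousAt (fun M : Matrix (Fin N) (Fin N) ℂ =>
        M i j * (starRingEnd ℂ) (H i j)) H :=
      ((continuous_id.matrix_elem i j).mul continuous_const).continuousAt
    have h2 : ContinuousAt Complex.arg (H i j * (starRingEnd ℂ) (H i j)) := by
      rw [hHone i j]
      exact Complex.continuousAt_arg Complex.one_mem_slitPlane
    exact ContinuousAt.comp (g := Complex.arg) h2 h1
  refine ⟨Φ ⁻¹' phi.source, hΦcont.preimage_mem_nhds (by rw [hΦH]; exact hsnhds), ?_⟩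
  intro H' hH'W hH' hdeph'
  set R : Fin N → Fin N → ℝ := Φ H' with hRdef
  -- every entry of H' is the corresponding entry of H times a phase
  have ha : ∀ i j, H' i j = H i j * Complex.exp (((R i j : ℝ) : ℂ) * Complex.I) := by
    intro i j
    have habs : ‖H' i j * (starRingEnd ℂ) (H i j)‖ = 1 := by
      rw [norm_mul, Complex.norm_conj, hH'.1 i j, hH.1 i j, mul_one]
    have key : Complex.exp (((R i j : ℝ) : ℂ) * Complex.I) =
        H' i j * (starRingEnd ℂ) (H i j) := by
      conv_rhs => rw [← Complex.norm_mul_exp_arg_mul_I (H' i j * (starRingEnd ℂ) (H i j))]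
      rw [habs]
      simp [hRdef, hΦ]
    rw [key, show H i j * (H' i j * (starRingEnd ℂ) (H i j)) =
      H' i j * (H i j * (starRingEnd ℂ) (H i j)) from by ring, hHone i j, mul_one]
  -- the constraint map takes the same value at R and 0
  have hGR : Gmap H i0 R = Gmap H i0 0 := by
    have e1 : R i0 = (0 : Fin N → Fin N → ℝ) i0 := by
      funext j
      show Complex.arg (H' i0 j * (starRingEnd ℂ) (H i0 j)) = 0
      rw [hdeph'.1 j, hdeph.1 j, map_one, mul_one, Complex.arg_one]
    have e2 : (fun i => R i i0) = (fun i => (0 : Fin N → Fin N → ℝ) i i0) := by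
      funext i
      show Complex.arg (H' i i0 * (starRingEnd ℂ) (H i i0)) = 0
      rw [hdeph'.2 i, hdeph.2 i, map_one, mul_one, Complex.arg_one]
    have e3 : ∀ i j : Fin N,
        (∑ k, H i k * (starRingEnd ℂ) (H j k) *
          Complex.exp ((((R i k : ℝ) : ℂ) - ((R j k : ℝ) : ℂ)) * Complex.I)) =
        ∑ k, H i k * (starRingEnd ℂ) (H j k) *
          Complex.exp (((((0:Fin N → Fin N → ℝ) i k : ℝ) : ℂ) -
            (((0:Fin N → Fin N → ℝ) j k : ℝ) : ℂ)) * Complex.I) := by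
      intro i j
      have lhs_eq : (∑ k, H i k * (starRingEnd ℂ) (H j k) *
          Complex.exp ((((R i k : ℝ) : ℂ) - ((R j k : ℝ) : ℂ)) * Complex.I)) =
          ∑ k, H' i k * (starRingEnd ℂ) (H' j k) := by
        refine Finset.sum_congr rfl fun k _ => ?_
        rw [ha i k, ha j k, map_mul]
        have hconjexp : (starRingEnd ℂ) (Complex.exp (((R j k : ℝ) : ℂ) * Complex.I)) =
            Complex.exp (-(((R j k : ℝ) : ℂ) * Complex.I)) := by
          rw [← Complex.exp_conj]
          congr 1
          simp [Complex.conj_ofReal]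
        rw [hconjexp]
        have hsplit : Complex.exp ((((R i k : ℝ) : ℂ) - ((R j k : ℝ) : ℂ)) * Complex.I) =
            Complex.exp (((R i k : ℝ) : ℂ) * Complex.I) *
              Complex.exp (-(((R j k : ℝ) : ℂ) * Complex.I)) := by
          rw [← Complex.exp_add]
          ring_nf
        rw [hsplit]
        ring
      have hprod : ∀ (M : Matrix (Fin N) (Fin N) ℂ), IsComplexHadamard M →
          (∑ k, M i k * (starRingEnd ℂ) (M j k)) =
            ((Fintype.card (Fin N) : ℂ) • (1 : Matrix (Fin N) (Fin N) ℂ)) i j := by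
        intro M hM
        rw [← hM.2]
        simp [Matrix.mul_apply, Matrix.conjTranspose_apply]
      rw [lhs_eq, hprod H' hH', ← hprod H hH]
      simp
    show (R i0, fun i => R i i0, fun i j => _) = (_, _, _)
    refine Prod.ext e1 (Prod.ext e2 ?_)
    funext i j
    exact e3 i j
  -- conclude R = 0 by local injectivity
  have hRs : R ∈ phi.source := hH'W
  have hR0 : R = 0 := hinj hRs hs0 (by simp only [Function.comp_apply, hGR])
  -- hence H' = H
  funext i j
  rw [ha i j, hR0]
  simp
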